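/- Let L be an n×n real symmetric positive semidefinite matrix with L·1 = 0 and rank(L) = n−1 (the weighted Laplacian of a connected graph). For distinct nodes i and j, let R_ij = (e_i − e_j)ᵀ L⁺ (e_i − e_j) be the effective resistance and let R̃_ij = dᵀ (L_SS)⁺ d be its principal-submatrix approximation, where L_SS is the 2×2 matrix [[L_ii, L_ij],[L_ji, L_jj]] and d = (1, −1)ᵀ. Then R̃_ij ≤ R_ij for all distinct i, j; that is, the approximation always underestimates the true effective resistance. -/

import Mathlib

/-!
For positive semidefinite `L` and `d` in the range of `L`, the quadratic `x ↦ 2 dᵀx - xᵀLx` is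
maximised where `Lx = d`, e.g. at `x = L⁺d`, with maximum `dᵀL⁺d`. For a connected Laplacian
`range L = 1ᗮ`, so `R_ij` is this maximum for `d = e_i - e_j`. Evaluating the quadratic at the
vector supported on `{i, j}` with entries `y = (L_SS)⁺d₂`, `d₂ = (1, -1)`, gives
`2 d₂ᵀy - yᵀ L_SS y = d₂ᵀy = R̃_ij`, because the pseudoinverse of a symmetric matrix is symmetric.
-/

open Matrix

/-- `G` satisfies the four Penrose equations for `A`, i.e. `G` is the Moore–Penrose
pseudoinverse of `A`. -/
def IsMoorePenrose {m n : ℕ} (A : Matrix (Fin m) (Fin n) ℝ)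
    (G : Matrix (Fin n) (Fin m) ℝ) : Prop :=
  A * G * A = A ∧ G * A * G = G ∧ (A * G)ᵀ = A * G ∧ (G * A)ᵀ = G * A

namespace IsMoorePenrose

variable {m n : ℕ} {A : Matrix (Fin m) (Fin n) ℝ} {G H : Matrix (Fin n) (Fin m) ℝ}

theorem transpose (hG : IsMoorePenrose A G) : IsMoorePenrose Aᵀ Gᵀ := by
  obtain ⟨h₁, h₂, h₃, h₄⟩ := hG
  refine ⟨?_, ?_, ?_, ?_⟩
  · rw [← transpose_mul, ← transpose_mul, ← Matrix.mul_assoc, h₁]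
  · rw [← transpose_mul, ← transpose_mul, ← Matrix.mul_assoc, h₂]
  · rw [← transpose_mul, transpose_transpose, h₄]
  · rw [← transpose_mul, transpose_transpose, h₃]

theorem unique (hG : IsMoorePenrose A G) (hH : IsMoorePenrose A H) : G = H := by
  obtain ⟨hG₁, hG₂, hG₃, hG₄⟩ := hG
  obtain ⟨hH₁, hH₂, hH₃, hH₄⟩ := hH
  have hG_eq : G = G * A * H := calc
    G = G * (A * G)ᵀ := by rw [hG₃, ← Matrix.mul_assoc, hG₂]
    _ = G * (A * H * (A * G))ᵀ := by rw [← Matrix.mul_assoc, hH₁]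
    _ = G * A * G * A * H := by rw [transpose_mul, hG₃, hH₃]; simp only [Matrix.mul_assoc]
    _ = G * A * H := by rw [hG₂]
  have hH_eq : H = G * A * H := calc
    H = (H * A)ᵀ * H := by rw [hH₄, hH₂]
    _ = (H * A * (G * A))ᵀ * H := by rw [Matrix.mul_assoc H, ← Matrix.mul_assoc A G A, hG₁]
    _ = G * A * (H * A * H) := by rw [transpose_mul, hG₄, hH₄]; simp only [Matrix.mul_assoc]
    _ = G * A * H := by rw [hH₂]
  rw [hG_eq, ← hH_eq]

theorem isSymm {A : Matrix (Fin n) (Fin n) ℝ} {G : Matrix (Fin n) (Fin n) ℝ}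
    (hG : IsMoorePenrose A G) (hA : A.IsSymm) : G.IsSymm :=
  hG.unique (hA.eq ▸ hG.transpose) |>.symm

theorem mulVec_mulVec_of_mulVec_eq (hG : IsMoorePenrose A G) {u : Fin n → ℝ} {b : Fin m → ℝ}
    (hu : A *ᵥ u = b) : A *ᵥ G *ᵥ b = b := by
  rw [← hu, mulVec_mulVec, mulVec_mulVec, hG.1]

theorem dotProduct_mulVec_mulVec {A : Matrix (Fin n) (Fin n) ℝ} {G : Matrix (Fin n) (Fin n) ℝ}
    (hG : IsMoorePenrose A G) (hA : A.IsSymm) (b : Fin n → ℝ) :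
    G *ᵥ b ⬝ᵥ A *ᵥ G *ᵥ b = b ⬝ᵥ G *ᵥ b := calc
  G *ᵥ b ⬝ᵥ A *ᵥ G *ᵥ b = b ᵥ* Gᵀ ⬝ᵥ A *ᵥ G *ᵥ b := by rw [vecMul_transpose]
  _ = b ⬝ᵥ (Gᵀ * A * G) *ᵥ b := by
    rw [← dotProduct_mulVec, mulVec_mulVec, mulVec_mulVec, Matrix.mul_assoc]
  _ = b ⬝ᵥ G *ᵥ b := by rw [(hG.isSymm hA).eq, hG.2.1]

end IsMoorePenrose

theorem Matrix.exists_mulVec_eq_of_sum_eq_zero {ι : Type*} [Fintype ι] [Nonempty ι]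
    {A : Matrix ι ι ℝ} (hA : (fun _ => 1) ᵥ* A = 0) (hrank : A.rank = Fintype.card ι - 1)
    {b : ι → ℝ} (hb : ∑ k, b k = 0) : ∃ u, A *ᵥ u = b := by
  classical
  set f := dotProductBilin ℝ ℝ (fun _ : ι => (1 : ℝ))
  have hf : f ≠ 0 := fun h => by
    simpa [f] using LinearMap.congr_fun h (Pi.single (Classical.arbitrary ι) 1)
  have hrange : LinearMap.range A.mulVecLin ≤ LinearMap.ker f := by
    rintro _ ⟨u, rfl⟩
    simp [f, dotProduct_mulVec, hA]
  have hker := Module.Dual.finrank_ker_add_one_of_ne_zero hf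
  rw [Module.finrank_fintype_fun_eq_card] at hker
  have hrange_eq := Submodule.eq_of_le_of_finrank_le hrange (by rw [← rank, hrank]; omega)
  have hbmem : b ∈ LinearMap.ker f := by simpa [f, dotProduct] using hb
  rw [← hrange_eq] at hbmem
  exact hbmem

theorem Matrix.PosSemidef.two_mul_dotProduct_sub_le {ι : Type*} [Fintype ι]
    {A : Matrix ι ι ℝ} (hA : A.PosSemidef) {d z : ι → ℝ} (hz : A *ᵥ z = d) (x : ι → ℝ) :
    2 * (d ⬝ᵥ x) - x ⬝ᵥ A *ᵥ x ≤ d ⬝ᵥ z := by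
  have hsymm : Aᵀ = A := (isHermitian_iff_isSymm.1 hA.isHermitian).eq
  have hnonneg := hA.dotProduct_mulVec_nonneg (x - z)
  have hzx : z ⬝ᵥ A *ᵥ x = d ⬝ᵥ x := by
    rw [dotProduct_mulVec, ← mulVec_transpose, hsymm, hz]
  have hxz : x ⬝ᵥ A *ᵥ z = d ⬝ᵥ x := by rw [hz, dotProduct_comm]
  have hzz : z ⬝ᵥ A *ᵥ z = d ⬝ᵥ z := by rw [hz, dotProduct_comm]
  simp only [star_trivial, mulVec_sub, sub_dotProduct, dotProduct_sub, hzx, hxz, hzz] at hnonneg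
  linarith

theorem Matrix.dotProduct_mulVec_submatrix_pair {ι : Type*} [Fintype ι] [DecidableEq ι]
    (A : Matrix ι ι ℝ) (i j : ι) (y : Fin 2 → ℝ) :
    y ⬝ᵥ A.submatrix ![i, j] ![i, j] *ᵥ y =
      (y 0 • Pi.single i 1 + y 1 • Pi.single j 1) ⬝ᵥ
        A *ᵥ (y 0 • Pi.single i 1 + y 1 • Pi.single j 1) := by
  simp [dotProduct, mulVec, Fin.sum_univ_two, Pi.single_apply, add_mul, mul_add,
    Finset.sum_add_distrib]

/-- The principal-submatrix approximation `R̃_ij = dᵀ (L_SS)⁺ d` always underestimates the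
true effective resistance `R_ij = (e_i - e_j)ᵀ L⁺ (e_i - e_j)` of a connected graph
Laplacian `L`. -/
theorem effective_resistance_underestimate (n : ℕ)
    (L : Matrix (Fin n) (Fin n) ℝ)
    (hL : L.PosSemidef) (h1 : L.mulVec (fun _ => (1 : ℝ)) = 0)
    (hrank : L.rank = n - 1)
    (i j : Fin n) (hij : i ≠ j)
    (Lp : Matrix (Fin n) (Fin n) ℝ) (hLp : IsMoorePenrose L Lp)
    (Sp : Matrix (Fin 2) (Fin 2) ℝ)
    (hSp : IsMoorePenrose !![L i i, L i j; L j i, L j j] Sp) :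
    ![(1 : ℝ), -1] ⬝ᵥ Sp.mulVec ![(1 : ℝ), -1] ≤
      (Pi.single i 1 - Pi.single j 1) ⬝ᵥ
        Lp.mulVec (Pi.single i 1 - Pi.single j 1) := by
  have : Nonempty (Fin n) := ⟨i⟩
  have hsymm : L.IsSymm := isHermitian_iff_isSymm.1 hL.isHermitian
  set d : Fin n → ℝ := Pi.single i 1 - Pi.single j 1
  set d₂ : Fin 2 → ℝ := ![1, -1]
  obtain ⟨u, hu⟩ : ∃ u, L *ᵥ u = d := by
    refine L.exists_mulVec_eq_of_sum_eq_zero ?_ (by rwa [Fintype.card_fin]) ?_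
    · rw [← mulVec_transpose, hsymm.eq, h1]
    · simp [d, Finset.sum_sub_distrib]
  have hsub : !![L i i, L i j; L j i, L j j] = L.submatrix ![i, j] ![i, j] := by
    ext a b; fin_cases a <;> fin_cases b <;> rfl
  rw [hsub] at hSp
  set y := Sp *ᵥ d₂
  set x : Fin n → ℝ := y 0 • Pi.single i 1 + y 1 • Pi.single j 1
  have hxLx : x ⬝ᵥ L *ᵥ x = d₂ ⬝ᵥ y := by
    rw [← dotProduct_mulVec_submatrix_pair, hSp.dotProduct_mulVec_mulVec (hsymm.submatrix _)]
  have hdx : d ⬝ᵥ x = d₂ ⬝ᵥ y := by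
    simp only [d, sub_dotProduct, single_dotProduct, one_mul]
    simp [x, d₂, hij, hij.symm, dotProduct, Fin.sum_univ_two, sub_eq_add_neg]
  have hmax := hL.two_mul_dotProduct_sub_le (hLp.mulVec_mulVec_of_mulVec_eq hu) x
  linarith
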